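/- Let n ≥ 5 be odd and let P_odd be the pot over bond-edge types a_1, …, a_{⌊n/2⌋+1} consisting of the ⌊n/2⌋+2 tiles t_1 = {a_1^{n-1}}, t_2 = {â_1, a_2, a_2}, t_i = {â_1, â_{i-1}, a_i} for 3 ≤ i ≤ ⌊n/2⌋+1, and t_{⌊n/2⌋+2} = {â_1, â_{⌊n/2⌋+1}, â_{⌊n/2⌋+1}}. Then the construction matrix M(P_odd) has the unique solution (1/n, 1/n, 2/n, …, 2/n, 1/n), where the entry 2/n occurs in coordinates 3 through ⌊n/2⌋+1, and consequently m_{P_odd} = n. -/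

import Mathlib

/-!
Basic framework for flexible-tile DNA self-assembly.

Bond-edge types are elements of `Fin m`.  A cohesive end is either unhatted
(`Sum.inl a`) or hatted (`Sum.inr a`).  A tile is a finite multiset of cohesive
ends, and a pot is a finite set of tiles.
-/

/-- A tile over the bond-edge alphabet `Fin m`. -/
abbrev Tile (m : ℕ) : Type := Multiset (Fin m ⊕ Fin m)

/-- A pot: a finite set of tiles over the alphabet `Fin m`. -/
abbrev Pot (m : ℕ) : Type := Finset (Tile m)

/-- A finite multigraph (nonempty finite vertex set, finite edge set; loops and
parallel edges allowed), edges recorded by their unordered pair of endpoints. -/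
structure Multigraph where
  V : Type
  E : Type
  [fintypeV : Fintype V]
  [decEqV : DecidableEq V]
  [nonemptyV : Nonempty V]
  [fintypeE : Fintype E]
  ends : E → Sym2 V

attribute [instance] Multigraph.fintypeV Multigraph.decEqV
  Multigraph.nonemptyV Multigraph.fintypeE

/-- The order (number of vertices) of a multigraph. -/
def Multigraph.order (G : Multigraph) : ℕ := Fintype.card G.V

/-- An assembly of `G` from tiles over `Fin m`: each edge gets an orientation
(an ordered pair of vertices compatible with its endpoints) and a bond-edge type. -/
structure Assembly (m : ℕ) (G : Multigraph) where
  orient : G.E → G.V × G.V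
  label : G.E → Fin m
  orient_ends : ∀ e : G.E, G.ends e = s((orient e).1, (orient e).2)

/-- The tile of a vertex `v` under an assembly: one unhatted `a` for each edge
labeled `a` oriented out of `v`, one hatted `a` for each edge labeled `a`
oriented into `v`. -/
def Assembly.tileOf {m : ℕ} {G : Multigraph} (A : Assembly m G) (v : G.V) : Tile m :=
  (Finset.univ : Finset G.E).val.bind fun e =>
    (if (A.orient e).1 = v then {Sum.inl (A.label e)} else 0) +
    (if (A.orient e).2 = v then {Sum.inr (A.label e)} else 0)

/-- `G` is realized by the pot `P`: there is an assembly of `G` all of whose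
vertex tiles belong to `P`. -/
def Realizes {m : ℕ} (P : Pot m) (G : Multigraph) : Prop :=
  ∃ A : Assembly m G, ∀ v : G.V, A.tileOf v ∈ P

/-- `C(P)`: the class of multigraphs realized by `P`. -/
def CSet {m : ℕ} (P : Pot m) : Set Multigraph := {G | Realizes P G}

/-- `m_P`: the minimum order of a multigraph realized by `P`. -/
noncomputable def mP {m : ℕ} (P : Pot m) : ℕ :=
  sInf {n | ∃ G ∈ CSet P, G.order = n}

/-- `C_min(P)`: the multigraphs realized by `P` of minimum order. -/
def Cmin {m : ℕ} (P : Pot m) : Set Multigraph :=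
  {G ∈ CSet P | G.order = mP P}

/-- An isomorphism of multigraphs. -/
structure MultigraphIso (G H : Multigraph) where
  vEquiv : G.V ≃ H.V
  eEquiv : G.E ≃ H.E
  ends_eq : ∀ e : G.E, H.ends (eEquiv e) = (G.ends e).map vEquiv

/-- Two multigraphs are isomorphic. -/
def Isomorphic (G H : Multigraph) : Prop := Nonempty (MultigraphIso G H)

/-- Scenario 1: minimum number of tile types over all pots realizing `G`. -/
noncomputable def T1 (G : Multigraph) : ℕ :=
  sInf {c | ∃ m : ℕ, ∃ P : Pot m, Realizes P G ∧ P.card = c}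

/-- Scenario 1: minimum number of bond-edge types over all pots realizing `G`. -/
noncomputable def B1 (G : Multigraph) : ℕ :=
  sInf {m | ∃ P : Pot m, Realizes P G}

/-- Scenario 2: minimum number of tile types over pots `P` with `G ∈ C(P)` and
`m_P = |V(G)|`. -/
noncomputable def T2 (G : Multigraph) : ℕ :=
  sInf {c | ∃ m : ℕ, ∃ P : Pot m, Realizes P G ∧ mP P = G.order ∧ P.card = c}

/-- Scenario 2: minimum number of bond-edge types over pots `P` with `G ∈ C(P)`
and `m_P = |V(G)|`. -/
noncomputable def B2 (G : Multigraph) : ℕ :=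
  sInf {m | ∃ P : Pot m, Realizes P G ∧ mP P = G.order}

/-- Scenario 3: minimum number of tile types over pots `P` with `C_min(P)`
consisting exactly of the multigraphs isomorphic to `G`. -/
noncomputable def T3 (G : Multigraph) : ℕ :=
  sInf {c | ∃ m : ℕ, ∃ P : Pot m, Cmin P = {H | Isomorphic H G} ∧ P.card = c}

/-- Scenario 3: minimum number of bond-edge types over pots `P` with `C_min(P)`
consisting exactly of the multigraphs isomorphic to `G`. -/
noncomputable def B3 (G : Multigraph) : ℕ :=
  sInf {m | ∃ P : Pot m, Cmin P = {H | Isomorphic H G}}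

/-- The degree of a vertex (a loop contributes 2). -/
def Multigraph.degree (G : Multigraph) (v : G.V) : ℕ :=
  ∑ e : G.E, (if v ∈ G.ends e then (if (G.ends e).IsDiag then 2 else 1) else 0)

/-- `av(G)`: the number of distinct vertex degrees in `G`. -/
def av (G : Multigraph) : ℕ := (Finset.univ.image G.degree).card

/-- `ev(G)`: the number of distinct even vertex degrees in `G`. -/
def ev (G : Multigraph) : ℕ :=
  ((Finset.univ.image G.degree).filter (fun d => Even d)).card

/-- `ov(G)`: the number of distinct odd vertex degrees in `G`. -/
def ov (G : Multigraph) : ℕ :=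
  ((Finset.univ.image G.degree).filter (fun d => Odd d)).card

/-- `z i t`: the net number of cohesive ends of type `i` on tile `t`
(unhatted count minus hatted count). -/
def zval {m : ℕ} (i : Fin m) (t : Tile m) : ℤ :=
  (t.count (Sum.inl i) : ℤ) - (t.count (Sum.inr i) : ℤ)

/-- The wheel graph on `n` vertices: the hub is `none`; the outer-cycle
vertices are `some i` for `i : Fin (n-1)`.  Edge `Sum.inl i` is the spoke from
the hub to `some i`; edge `Sum.inr i` is the outer-cycle edge from `some i` to
`some ((i+1) mod (n-1))`. -/
def wheel (n : ℕ) : Multigraph where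
  V := Option (Fin (n - 1))
  E := Fin (n - 1) ⊕ Fin (n - 1)
  ends e :=
    match e with
    | Sum.inl i => s((none : Option (Fin (n - 1))), some i)
    | Sum.inr i => s(some i,
        some ⟨(i.val + 1) % (n - 1), Nat.mod_lt _ (by have := i.isLt; omega)⟩)

/-- The cycle graph on `n` vertices (vertices `none, some 0, …, some (n-2)`,
edge `k` joining the `k`-th and `(k+1 mod n)`-th vertices in this order). -/
def cycleVtx (n : ℕ) (k : Fin n) : Option (Fin (n - 1)) :=
  if h : k.val = 0 then none else some ⟨k.val - 1, by have := k.isLt; omega⟩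

def cycleGraph (n : ℕ) : Multigraph where
  V := Option (Fin (n - 1))
  E := Fin n
  ends k := s(cycleVtx n k,
    cycleVtx n ⟨(k.val + 1) % n, Nat.mod_lt _ (by have := k.isLt; omega)⟩)

/-!
Each edge of an assembly contributes one unhatted and one hatted end of the same type, so the
net counts `zval i` summed over all vertex tiles vanish.  Hence if `c j` vertices of a realized
graph `G` carry tile `t j`, then `c / |V(G)|` solves the construction matrix.

For `P_odd` with `n = 2k + 1`, the row of `a₁` reads `n r₁ = Σ r = 1`, and, after dividing the
columns by the weights `(1, 1, 2, …, 2, 1)`, each row `aᵢ` with `i ≥ 2` is a difference of two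
consecutive coordinates.  So the unique solution is the weight vector divided by `n`, and
`c₁ / |V(G)| = 1 / n` forces `|V(G)| = n c₁ ≥ n`.  The bound is attained by the wheel `W_n`: the
hub gets `t₁`, and a rim vertex at distance `ℓ` from a fixed rim vertex gets `t_{ℓ+2}`, every rim
edge pointing away from that vertex and having type `a_{ℓ+1}`, where `ℓ` is the distance of its
farther endpoint.
-/

open Finset

def IsConstructionSolution {m : ℕ} {ι : Type*} [Fintype ι] (t : ι → Tile m) (r : ι → ℚ) :
    Prop :=
  (∀ i : Fin m, ∑ j, r j * (zval i (t j) : ℚ) = 0) ∧ ∑ j, r j = 1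

lemma zval_sum {m : ℕ} {κ : Type*} (i : Fin m) (s : Finset κ) (f : κ → Tile m) :
    zval i (∑ x ∈ s, f x) = ∑ x ∈ s, zval i (f x) := by
  simp [zval, Multiset.count_sum']

lemma zval_inl_inr_eq_zero {m : ℕ} (i a : Fin m) : zval i {Sum.inl a, Sum.inr a} = 0 := by
  simp [zval, Multiset.insert_eq_cons, Multiset.count_cons, Multiset.count_singleton, eq_comm]

namespace Assembly

variable {m : ℕ} {G : Multigraph} (A : Assembly m G)

def endsAt (e : G.E) (v : G.V) : Tile m :=
  (if (A.orient e).1 = v then {Sum.inl (A.label e)} else 0) +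
    (if (A.orient e).2 = v then {Sum.inr (A.label e)} else 0)

lemma tileOf_eq_sum_endsAt (v : G.V) : A.tileOf v = ∑ e, A.endsAt e v := rfl

lemma sum_tileOf : ∑ v, A.tileOf v = ∑ e, {Sum.inl (A.label e), Sum.inr (A.label e)} := by
  simp only [tileOf_eq_sum_endsAt, endsAt]
  rw [sum_comm]
  refine sum_congr rfl fun e _ => ?_
  rw [sum_add_distrib, sum_ite_eq, sum_ite_eq]
  simp only [mem_univ, ↓reduceIte]
  rfl

lemma sum_zval_tileOf (i : Fin m) : ∑ v, zval i (A.tileOf v) = 0 := by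
  rw [← zval_sum, sum_tileOf, zval_sum]
  exact sum_eq_zero fun e _ => zval_inl_inr_eq_zero i (A.label e)

end Assembly

theorem exists_isConstructionSolution_of_realizes {m : ℕ} {ι : Type*} [Fintype ι]
    [DecidableEq ι] {t : ι → Tile m} {G : Multigraph} (h : Realizes (univ.image t) G) :
    ∃ c : ι → ℕ, IsConstructionSolution t fun j => (c j : ℚ) / G.order := by
  obtain ⟨A, hA⟩ := h
  choose f hf using fun v => mem_image.mp (hA v)
  have hcount (g : ι → ℚ) : ∑ j, (#{v | f v = j} : ℚ) * g j = ∑ v, g (f v) := by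
    simp only [← sum_fiberwise' univ f g, sum_const, nsmul_eq_mul]
  have horder : (G.order : ℚ) ≠ 0 := by simp [Multigraph.order]
  refine ⟨fun j => #{v | f v = j}, fun i => ?_, ?_⟩
  · simp only [div_mul_eq_mul_div, ← sum_div, hcount, hf]
    rw [← Int.cast_sum, A.sum_zval_tileOf, Int.cast_zero, zero_div]
  · rw [← sum_div, div_eq_one_iff_eq horder]
    simpa [Multigraph.order] using hcount 1

/-- The pot `P_odd` for `n = 2k + 1`, indexed from `0`: `oddTile k j` is the paper's `t_{j+1}`
and the bond-edge type `i : Fin (k + 1)` is `a_{i+1}`. -/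
def oddTile (k : ℕ) (j : Fin (k + 2)) : Tile (k + 1) :=
  if j.val = 0 then Multiset.replicate (2 * k) (Sum.inl 0)
  else if h : j.val ≤ k then
    if h1 : j.val = 1 then {Sum.inr 0, Sum.inl ⟨1, by omega⟩, Sum.inl ⟨1, by omega⟩}
    else {Sum.inr 0, Sum.inr ⟨j.val - 1, by omega⟩, Sum.inl ⟨j.val, by omega⟩}
  else {Sum.inr 0, Sum.inr (Fin.last k), Sum.inr (Fin.last k)}

def oddWeight (k : ℕ) (j : Fin (k + 2)) : ℚ := if 2 ≤ j.val ∧ j.val ≤ k then 2 else 1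

section OddPot

variable {k : ℕ}

lemma oddTile_zero : oddTile k 0 = Multiset.replicate (2 * k) (Sum.inl 0) := by
  simp [oddTile]

lemma oddTile_one (hk : 1 ≤ k) :
    oddTile k 1 = {Sum.inr 0, Sum.inl ⟨1, by omega⟩, Sum.inl ⟨1, by omega⟩} := by
  simp [oddTile, hk]

lemma oddTile_of_le (j : Fin (k + 2)) (h2 : 2 ≤ j.val) (hjk : j.val ≤ k) :
    oddTile k j = {Sum.inr 0, Sum.inr ⟨j.val - 1, by omega⟩, Sum.inl ⟨j.val, by omega⟩} := by
  rw [oddTile, if_neg (by omega), dif_pos hjk, dif_neg (by omega)]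

lemma oddTile_last :
    oddTile k (Fin.last (k + 1)) = {Sum.inr 0, Sum.inr (Fin.last k), Sum.inr (Fin.last k)} := by
  simp [oddTile]

lemma zval_zero_oddTile (hk : 1 ≤ k) (j : Fin (k + 2)) :
    zval 0 (oddTile k j) = if j = 0 then (2 * k : ℤ) else -1 := by
  simp only [oddTile, Fin.ext_iff, Fin.val_zero]
  split_ifs <;>
    simp only [zval, Multiset.count_replicate, Multiset.insert_eq_cons, Multiset.count_cons,
      Multiset.count_singleton, Sum.inl.injEq, Sum.inr.injEq, reduceCtorEq, Fin.ext_iff,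
      Fin.val_zero, Fin.val_last, ↓reduceIte] <;>
    (try split_ifs) <;> push_cast <;> omega

lemma zval_succ_oddTile (i : Fin k) (j : Fin (k + 2)) :
    (zval i.succ (oddTile k j) : ℚ) =
      (if j = i.castSucc.succ then 2 / oddWeight k j else 0) -
        (if j = i.succ.succ then 2 / oddWeight k j else 0) := by
  simp only [oddTile, oddWeight, Fin.ext_iff, Fin.val_succ, Fin.val_castSucc]
  split_ifs <;>
    simp only [zval, Multiset.count_replicate, Multiset.insert_eq_cons, Multiset.count_cons,
      Multiset.count_singleton, Sum.inl.injEq, Sum.inr.injEq, reduceCtorEq, Fin.ext_iff,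
      Fin.val_zero, Fin.val_last, Fin.val_succ, ↓reduceIte] <;>
    (try split_ifs) <;> first | (exfalso; omega) | norm_num

lemma oddWeight_ne_zero (j : Fin (k + 2)) : oddWeight k j ≠ 0 := by
  unfold oddWeight; split_ifs <;> norm_num

lemma oddWeight_zero : oddWeight k 0 = 1 := by simp [oddWeight]

lemma oddWeight_one : oddWeight k 1 = 1 := by simp [oddWeight]

lemma sum_oddWeight (hk : 1 ≤ k) : ∑ j, oddWeight k j = 2 * k + 1 := by
  have h (j : Fin (k + 2)) : oddWeight k j = 2 - ((if j = 0 then 1 else 0) +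
      (if j = 1 then 1 else 0) + (if j = Fin.last _ then 1 else 0)) := by
    simp only [oddWeight, Fin.ext_iff, Fin.val_zero, Fin.val_one, Fin.val_last]
    split_ifs <;> first | (exfalso; omega) | norm_num
  simp only [h, sum_sub_distrib, sum_add_distrib, sum_ite_eq', mem_univ, ↓reduceIte, sum_const,
    card_univ, Fintype.card_fin]
  ring

lemma sum_mul_zval_zero_oddTile (hk : 1 ≤ k) (r : Fin (k + 2) → ℚ) :
    ∑ j, r j * (zval 0 (oddTile k j) : ℚ) = (2 * k + 1) * r 0 - ∑ j, r j := by
  have hsummand (j : Fin (k + 2)) : r j * (zval 0 (oddTile k j) : ℚ) =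
      (if j = 0 then (2 * k + 1) * r j else 0) - r j := by
    rw [zval_zero_oddTile hk]; split_ifs <;> push_cast <;> ring
  simp only [hsummand, sum_sub_distrib, sum_ite_eq', mem_univ, ↓reduceIte]

lemma sum_mul_zval_succ_oddTile (i : Fin k) (r : Fin (k + 2) → ℚ) :
    ∑ j, r j * (zval i.succ (oddTile k j) : ℚ) =
      2 * (r i.castSucc.succ / oddWeight k i.castSucc.succ -
        r i.succ.succ / oddWeight k i.succ.succ) := by
  simp only [zval_succ_oddTile, mul_sub, mul_ite, mul_zero, sum_sub_distrib, sum_ite_eq',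
    mem_univ, ↓reduceIte]
  ring

theorem isConstructionSolution_oddTile_iff (hk : 1 ≤ k) (r : Fin (k + 2) → ℚ) :
    IsConstructionSolution (oddTile k) r ↔ ∀ j, r j = oddWeight k j / (2 * k + 1) := by
  have hn : (2 * k + 1 : ℚ) ≠ 0 := by positivity
  constructor
  · rintro ⟨hrow, hsum⟩
    have hr0 : (2 * k + 1) * r 0 = 1 := by
      simpa [sum_mul_zval_zero_oddTile hk, hsum, sub_eq_zero] using hrow 0
    have hratio (j : Fin (k + 1)) : r j.succ = oddWeight k j.succ * r 1 := by
      induction j using Fin.induction with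
      | zero => rw [Fin.succ_zero_eq_one, oddWeight_one, one_mul]
      | succ i ih =>
        have hi := hrow i.succ
        rw [sum_mul_zval_succ_oddTile, ih, mul_div_cancel_left₀ _ (oddWeight_ne_zero _)] at hi
        field_simp [oddWeight_ne_zero] at hi
        linarith
    have hr1 : (2 * k + 1) * r 1 = 1 := by
      have hw := sum_oddWeight hk
      rw [Fin.sum_univ_succ, oddWeight_zero] at hw
      rw [Fin.sum_univ_succ] at hsum
      simp only [hratio, ← sum_mul,
        show ∑ j : Fin (k + 1), oddWeight k j.succ = 2 * k by linarith] at hsum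
      apply mul_left_cancel₀ (show (2 * k : ℚ) ≠ 0 by positivity)
      linear_combination (2 * k + 1) * hsum - hr0
    intro j
    cases j using Fin.cases with
    | zero => rw [oddWeight_zero, eq_div_iff hn]; linarith
    | succ j => rw [hratio, eq_div_iff hn]; linear_combination oddWeight k j.succ * hr1
  · intro hr
    refine ⟨fun i => ?_, ?_⟩
    · cases i using Fin.cases with
      | zero =>
        rw [sum_mul_zval_zero_oddTile hk]
        simp only [hr, oddWeight_zero, ← sum_div, sum_oddWeight hk]
        field_simp
        ring
      | succ i =>
        simp only [sum_mul_zval_succ_oddTile, hr, div_right_comm _ (2 * k + 1 : ℚ),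
          div_self (oddWeight_ne_zero _), sub_self, mul_zero]
    · simp only [hr, ← sum_div, sum_oddWeight hk, div_self hn]

lemma le_order_of_realizes_oddTile (hk : 1 ≤ k) {G : Multigraph}
    (hG : Realizes (univ.image (oddTile k)) G) : 2 * k + 1 ≤ G.order := by
  obtain ⟨c, hc⟩ := exists_isConstructionSolution_of_realizes hG
  have h0 := (isConstructionSolution_oddTile_iff hk _).mp hc 0
  have horder : (G.order : ℚ) ≠ 0 := by simp [Multigraph.order]
  rw [oddWeight_zero, div_eq_div_iff horder (by positivity), one_mul] at h0
  have hN : G.order = c 0 * (2 * k + 1) := by exact_mod_cast h0.symm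
  have hc0 : c 0 ≠ 0 := by
    rintro h
    simp [h, Multigraph.order] at hN
  rw [hN]
  exact Nat.le_mul_of_pos_left _ (Nat.pos_of_ne_zero hc0)

end OddPot

namespace OddWheel

variable {k : ℕ}

def rimSucc (i : Fin (2 * k)) : Fin (2 * k) :=
  ⟨(i.val + 1) % (2 * k), Nat.mod_lt _ (by have := i.isLt; omega)⟩

def rimPred (i : Fin (2 * k)) : Fin (2 * k) :=
  ⟨if i.val = 0 then 2 * k - 1 else i.val - 1, by split_ifs <;> omega⟩

lemma rimSucc_val (i : Fin (2 * k)) :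
    (rimSucc i).val = if i.val + 1 = 2 * k then 0 else i.val + 1 := by
  have := i.isLt
  split_ifs with h
  · simp [rimSucc, h]
  · exact Nat.mod_eq_of_lt (by omega)

lemma rimSucc_eq_iff (i w : Fin (2 * k)) : rimSucc i = w ↔ i = rimPred w := by
  have := i.isLt
  have := w.isLt
  simp only [Fin.ext_iff, rimSucc_val, rimPred]
  split_ifs <;> omega

lemma rimSucc_rimPred (w : Fin (2 * k)) : rimSucc (rimPred w) = w := (rimSucc_eq_iff _ _).mpr rfl

/-- The wheel `W_{2k+1}`, laid out as `wheel (2 * k + 1)` but with vertex type reducibly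
`Option (Fin (2 * k))`. -/
abbrev graph (k : ℕ) : Multigraph where
  V := Option (Fin (2 * k))
  E := Fin (2 * k) ⊕ Fin (2 * k)
  ends
    | .inl i => s(none, some i)
    | .inr i => s(some i, some (rimSucc i))

lemma order_graph : (graph k).order = 2 * k + 1 := by simp [Multigraph.order]

def level (i : Fin (2 * k)) : Fin (k + 1) := ⟨min i.val (2 * k - i.val), by omega⟩

lemma level_rimSucc_ne (i : Fin (2 * k)) : level (rimSucc i) ≠ level i := by
  have := i.isLt
  simp only [ne_eq, Fin.ext_iff, level, rimSucc_val]
  split_ifs <;> omega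

def rimEnd (a b : Fin (k + 1)) : Fin (k + 1) ⊕ Fin (k + 1) :=
  if a < b then Sum.inl b else Sum.inr a

/-- Spokes leave the hub with type `a₁`; a rim edge points to its endpoint of higher level `ℓ`
and has type `a_{ℓ+1}`, so that the end it leaves at a vertex of level `a` whose other
endpoint has level `b` is `rimEnd a b`. -/
def assembly (k : ℕ) : Assembly (k + 1) (graph k) where
  orient
    | .inl i => (none, some i)
    | .inr i => if level i < level (rimSucc i) then (some i, some (rimSucc i))
        else (some (rimSucc i), some i)
  label
    | .inl _ => 0
    | .inr i => max (level i) (level (rimSucc i))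
  orient_ends
    | .inl _ => rfl
    | .inr i => by
        dsimp only
        split_ifs
        · rfl
        · exact Sym2.eq_swap

lemma endsAt_inr (i : Fin (2 * k)) (v : Option (Fin (2 * k))) :
    (assembly k).endsAt (.inr i) v =
      (if some i = v then {rimEnd (level i) (level (rimSucc i))} else 0) +
        (if some (rimSucc i) = v then {rimEnd (level (rimSucc i)) (level i)} else 0) := by
  simp only [Assembly.endsAt, assembly, rimEnd]
  by_cases h : level i < level (rimSucc i)
  · rw [if_pos h, if_pos h, if_neg (not_lt_of_gt h), max_eq_right h.le]
  · have h' : level (rimSucc i) < level i := lt_of_le_of_ne (not_lt.mp h) (level_rimSucc_ne i)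
    rw [if_neg h, if_neg h, if_pos h', max_eq_left h'.le]
    exact add_comm _ _

lemma tileOf_none : (assembly k).tileOf none = Multiset.replicate (2 * k) (Sum.inl 0) := by
  simp only [Assembly.tileOf_eq_sum_endsAt, Fintype.sum_sum_type, endsAt_inr]
  simp [Assembly.endsAt, assembly, Multiset.nsmul_singleton]

lemma tileOf_some (w : Fin (2 * k)) :
    (assembly k).tileOf (some w) = {Sum.inr 0} +
      ({rimEnd (level w) (level (rimSucc w))} + {rimEnd (level w) (level (rimPred w))}) := by
  simp only [Assembly.tileOf_eq_sum_endsAt, Fintype.sum_sum_type, endsAt_inr, sum_add_distrib,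
    Option.some_inj, rimSucc_eq_iff, sum_ite_eq', mem_univ, ↓reduceIte, rimSucc_rimPred]
  congr 1
  simp [Assembly.endsAt, assembly]

lemma rimEnd_rimSucc (w : Fin (2 * k)) :
    rimEnd (level w) (level (rimSucc w)) =
      if h : w.val < k then Sum.inl ⟨w.val + 1, by omega⟩ else Sum.inr (level w) := by
  have := w.isLt
  unfold rimEnd
  split_ifs <;> simp_all [Fin.ext_iff, Fin.lt_def, level, rimSucc_val] <;> split_ifs at * <;> omega

lemma rimEnd_rimPred (w : Fin (2 * k)) :
    rimEnd (level w) (level (rimPred w)) =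
      if h : 1 ≤ w.val ∧ w.val ≤ k then Sum.inr (level w)
      else Sum.inl ⟨min w.val (2 * k - w.val) + 1, by omega⟩ := by
  have := w.isLt
  unfold rimEnd
  split_ifs <;> simp_all [Fin.ext_iff, Fin.lt_def, level, rimPred] <;> split_ifs at * <;> omega

lemma tileOf_some_eq_oddTile (w : Fin (2 * k)) :
    (assembly k).tileOf (some w) = oddTile k ⟨level w + 1, by omega⟩ := by
  have hw := w.isLt
  rw [tileOf_some, rimEnd_rimSucc, rimEnd_rimPred]
  obtain h | h | h | h : w.val = 0 ∨ (1 ≤ w.val ∧ w.val < k) ∨ w.val = k ∨ k < w.val := by omega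
  on_goal 1 => rw [show (⟨level w + 1, _⟩ : Fin (k + 2)) = 1 from Fin.ext (by simp [level]; omega),
    oddTile_one (by omega)]
  on_goal 2 => rw [oddTile_of_le _ (by simp [level]; omega) (by simp [level]; omega)]
  on_goal 3 => rw [show (⟨level w + 1, _⟩ : Fin (k + 2)) = Fin.last _ from
    Fin.ext (by simp [level]; omega), oddTile_last]
  on_goal 4 => rw [oddTile_of_le _ (by simp [level]; omega) (by simp [level]; omega)]
  all_goals
    simp (disch := omega) only [dif_pos, dif_neg]
    ext a
    rcases a with a | a <;>
      simp only [Multiset.count_add, Multiset.count_singleton, Multiset.insert_eq_cons,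
        Multiset.count_cons, Sum.inl.injEq, Sum.inr.injEq, reduceCtorEq, Fin.ext_iff, level,
        Fin.val_zero, Fin.val_last] <;>
      split_ifs <;> omega

lemma realizes : Realizes (univ.image (oddTile k)) (graph k) := by
  refine ⟨assembly k, fun v => mem_image.mpr ?_⟩
  cases v with
  | none => exact ⟨0, mem_univ _, oddTile_zero.trans tileOf_none.symm⟩
  | some w => exact ⟨_, mem_univ _, (tileOf_some_eq_oddTile w).symm⟩

end OddWheel

theorem mP_oddTile {k : ℕ} (hk : 1 ≤ k) : mP (univ.image (oddTile k)) = 2 * k + 1 := by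
  have hmem : 2 * k + 1 ∈ {N | ∃ G ∈ CSet (univ.image (oddTile k)), G.order = N} :=
    ⟨_, OddWheel.realizes, OddWheel.order_graph⟩
  refine le_antisymm (Nat.sInf_le hmem) (le_csInf ⟨_, hmem⟩ ?_)
  rintro _ ⟨G, hG, rfl⟩
  exact le_order_of_realizes_oddTile hk hG

/-- For odd `n = 2k+1 ≥ 5`, the pot `P_odd` (with `k+1 = ⌊n/2⌋+1` bond-edge
types and `k+2 = ⌊n/2⌋+2` tiles `t₁ = {a₁^{n-1}}`, `t₂ = {â₁, a₂, a₂}`,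
`tᵢ = {â₁, â_{i-1}, aᵢ}` for `3 ≤ i ≤ ⌊n/2⌋+1`, and
`t_{⌊n/2⌋+2} = {â₁, â_{⌊n/2⌋+1}, â_{⌊n/2⌋+1}}`; here `0`-indexed) has
construction matrix with unique solution `(1/n, 1/n, 2/n, …, 2/n, 1/n)` (the
entry `2/n` in `1`-indexed coordinates `3` through `⌊n/2⌋+1`), and consequently
`m_{P_odd} = n`. -/
theorem scenario3_odd_pot_matrix (n k : ℕ) (hk : 2 ≤ k) (hnk : n = 2 * k + 1)
    (t : Fin (k + 2) → Tile (k + 1))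
    (ht0 : t 0 = Multiset.replicate (n - 1) (Sum.inl ⟨0, by omega⟩))
    (ht1 : t 1 = ({Sum.inr ⟨0, by omega⟩, Sum.inl ⟨1, by omega⟩,
      Sum.inl ⟨1, by omega⟩} : Tile (k + 1)))
    (hti : ∀ (j : Fin (k + 2)) (h2 : 2 ≤ j.val) (hjk : j.val ≤ k),
      t j = ({Sum.inr ⟨0, by omega⟩,
        Sum.inr ⟨j.val - 1, by have := j.isLt; omega⟩,
        Sum.inl ⟨j.val, by have := hjk; omega⟩} : Tile (k + 1)))
    (htlast : t ⟨k + 1, by omega⟩ = ({Sum.inr ⟨0, by omega⟩,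
      Sum.inr ⟨k, by omega⟩, Sum.inr ⟨k, by omega⟩} : Tile (k + 1))) :
    (∀ r : Fin (k + 2) → ℚ,
        ((∀ i : Fin (k + 1), ∑ j, r j * (zval i (t j) : ℚ) = 0) ∧ ∑ j, r j = 1) ↔
          ∀ j : Fin (k + 2), r j =
            if 2 ≤ j.val ∧ j.val ≤ k then 2 / (n : ℚ) else 1 / (n : ℚ)) ∧
    mP (Finset.image t Finset.univ) = n := by
  subst hnk
  have ht : t = oddTile k := by
    funext j
    obtain h | h | h | h : j.val = 0 ∨ j.val = 1 ∨ (2 ≤ j.val ∧ j.val ≤ k) ∨ j.val = k + 1 := by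
      omega
    · obtain rfl : j = 0 := Fin.ext h
      rw [ht0, oddTile_zero, Nat.add_sub_cancel]
      rfl
    · obtain rfl : j = 1 := Fin.ext h
      exact ht1.trans (oddTile_one (by omega)).symm
    · exact (hti j h.1 h.2).trans (oddTile_of_le j h.1 h.2).symm
    · obtain rfl : j = Fin.last _ := Fin.ext h
      exact htlast.trans oddTile_last.symm
  subst ht
  refine ⟨fun r => (isConstructionSolution_oddTile_iff (by omega) r).trans ?_, ?_⟩
  · simp only [oddWeight, ite_div]
    push_cast
    rfl
  · exact mP_oddTile (by omega)
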